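/- Let A be a commutative ring and suppose f ∈ A[[x, y]] is a power series f = Σ_{n,m} b_{n,m} x^n y^m. Fix d. If for every N ∈ ℕ the coefficient of h^d in f evaluated h-adically at x = e^{2h} − 1, y = e^{2Nh} − 1 vanishes, and b_{n,m} = 0 whenever n + m < d, then b_{n,m} = 0 for all n + m = d. -/

import Mathlib

/-!
Both `e^{2h} - 1` and `e^{2Nh} - 1` have zero constant term and linear coefficients `2` and
`2N`. Hence, once the terms with `n + m < d` are gone, the coefficient of `h^d` only sees the
leading terms and equals `∑_{n+m=d} b_{n,m} 2^n (2N)^m`: a polynomial in `N` vanishing at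
every natural number, so all its coefficients vanish.
-/

namespace PowerSeries

variable {R : Type*} [CommRing R]

theorem coeff_pow_mul_pow_of_constantCoeff_eq_zero {f g : R⟦X⟧}
    (hf : constantCoeff f = 0) (hg : constantCoeff g = 0) {n m k : ℕ} (hk : k ≤ n + m) :
    coeff k (f ^ n * g ^ m) = if k = n + m then coeff 1 f ^ n * coeff 1 g ^ m else 0 := by
  obtain ⟨u, rfl⟩ := X_dvd_iff.mpr hf
  obtain ⟨v, rfl⟩ := X_dvd_iff.mpr hg
  rw [show (X * u) ^ n * (X * v) ^ m = X ^ (n + m) * (u ^ n * v ^ m) by ring, coeff_X_pow_mul']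
  split_ifs with hle heq heq
  · rw [heq, Nat.sub_self, coeff_zero_eq_constantCoeff_apply, map_mul, map_pow, map_pow,
      ← zero_add 1, coeff_succ_X_mul, coeff_succ_X_mul, coeff_zero_eq_constantCoeff_apply,
      coeff_zero_eq_constantCoeff_apply]
  · omega
  · omega
  · rfl

theorem coeff_sum_pow_mul_pow_of_constantCoeff_eq_zero {f g : R⟦X⟧}
    (hf : constantCoeff f = 0) (hg : constantCoeff g = 0) (b : ℕ → ℕ → R) {d : ℕ}
    (hlow : ∀ n m : ℕ, n + m < d → b n m = 0) :
    coeff d (∑ n ∈ Finset.range (d + 1), ∑ m ∈ Finset.range (d + 1), C (b n m) * (f ^ n * g ^ m)) =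
      ∑ m ∈ Finset.range (d + 1), b (d - m) m * coeff 1 f ^ (d - m) * coeff 1 g ^ m := by
  simp only [map_sum]
  rw [Finset.sum_comm]
  refine Finset.sum_congr rfl fun m hm => ?_
  have hmd : m ≤ d := Nat.lt_succ_iff.mp (Finset.mem_range.mp hm)
  rw [Finset.sum_eq_single (d - m)]
  · rw [coeff_C_mul, coeff_pow_mul_pow_of_constantCoeff_eq_zero hf hg (by omega),
      if_pos (by omega), mul_assoc]
  · intro n _ hn
    rw [coeff_C_mul]
    rcases lt_or_ge (n + m) d with hlt | hge
    · rw [hlow n m hlt, zero_mul]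
    · rw [coeff_pow_mul_pow_of_constantCoeff_eq_zero hf hg hge, if_neg (by omega), mul_zero]
  · simp only [Finset.mem_range]
    omega

theorem constantCoeff_rescale_exp_sub_one {A : Type*} [CommRing A] [Algebra ℚ A] (c : A) :
    constantCoeff (rescale c (exp A) - 1) = 0 := by
  rw [map_sub, ← coeff_zero_eq_constantCoeff_apply, coeff_rescale]
  simp

theorem coeff_one_rescale_exp_sub_one {A : Type*} [CommRing A] [Algebra ℚ A] (c : A) :
    coeff 1 (rescale c (exp A) - 1) = c := by
  simp [coeff_rescale, coeff_one]

end PowerSeries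

open Polynomial in
theorem Polynomial.eq_zero_of_forall_sum_natCast_eq_zero {R : Type*} [CommRing R] [IsDomain R]
    [CharZero R] (c : ℕ → R) (d : ℕ)
    (h : ∀ N : ℕ, ∑ m ∈ Finset.range (d + 1), c m * (N : R) ^ m = 0) {m : ℕ} (hm : m ≤ d) :
    c m = 0 := by
  set p : R[X] := ∑ k ∈ Finset.range (d + 1), C (c k) * X ^ k
  have hp : p = 0 := by
    refine p.eq_zero_of_infinite_isRoot <|
      (Set.infinite_range_of_injective Nat.cast_injective).mono ?_
    rintro _ ⟨N, rfl⟩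
    simpa [p, eval_finsetSum] using h N
  have hcoeff := congrArg (coeff · m) hp
  simpa [p, finsetSum_coeff, coeff_C_mul, coeff_X_pow, Nat.lt_succ_iff.mpr hm] using hcoeff

/-- Let `f = ∑ b_{n,m} x^n y^m` be a power series over `ℚ` and fix `d`.  If
`b_{n,m} = 0` whenever `n + m < d`, and for every `N ∈ ℕ` the coefficient of `h^d` of
`f` substituted `h`-adically at `x = e^{2h} - 1`, `y = e^{2Nh} - 1` vanishes
(only terms with `n, m ≤ d` contribute to this coefficient), then `b_{n,m} = 0`
for all `n + m = d`. -/
theorem stmt10 (b : ℕ → ℕ → ℚ) (d : ℕ)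
    (hlow : ∀ n m : ℕ, n + m < d → b n m = 0)
    (hvan : ∀ N : ℕ,
      PowerSeries.coeff (R := ℚ) d
        (∑ n ∈ Finset.range (d + 1), ∑ m ∈ Finset.range (d + 1),
          PowerSeries.C (R := ℚ) (b n m) *
            ((PowerSeries.rescale (2 : ℚ) (PowerSeries.exp ℚ) - 1) ^ n *
              (PowerSeries.rescale (2 * (N : ℚ)) (PowerSeries.exp ℚ) - 1) ^ m)) = 0) :
    ∀ n m : ℕ, n + m = d → b n m = 0 := by
  intro n m hnm
  have hsum (N : ℕ) :
      ∑ k ∈ Finset.range (d + 1), b (d - k) k * 2 ^ (d - k) * (2 * (N : ℚ)) ^ k = 0 := by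
    simpa only [PowerSeries.coeff_one_rescale_exp_sub_one] using
      (PowerSeries.coeff_sum_pow_mul_pow_of_constantCoeff_eq_zero
        (PowerSeries.constantCoeff_rescale_exp_sub_one _)
        (PowerSeries.constantCoeff_rescale_exp_sub_one _) b hlow).symm.trans (hvan N)
  have hcoeff := Polynomial.eq_zero_of_forall_sum_natCast_eq_zero
    (fun k => b (d - k) k * 2 ^ (d - k) * 2 ^ k) d
    (fun N => by rw [← hsum N]; exact Finset.sum_congr rfl fun k _ => by ring) (m := m) (by omega)
  obtain rfl : n = d - m := by omega
  simpa using hcoeff
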